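/- arXiv:2411.06191 — 6 statements merged into one kernel-verified Lean document; each statement's English description precedes it below -/
import Mathlib

section
/- For every non-redundant hyper-relational knowledge graph G over (E, R) and every injective enumeration ι : G → M of mediator names, the recovery map applied to the equivalent transformation returns G exactly: Rec(T_ι(G)) = G. In particular the recovered HKG does not depend on the choice of mediator names, so the equivalent transformation preserves the complete information of the HKG. -/
/-- A hyper-relational fact over entities `E` and relations `R`: a primary triple
`(s, r, o)` together with a finite set `q` of attribute–value qualifiers. -/
structure HFact (E R : Type) where
  s : E
  r : R
  o : E
  q : Finset (R × E)

/-- The relation `(r, 0)` used for primary/attribute edges in the transformed KG. -/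
def prim {R : Type} (r : R) : R × Fin 3 := (r, 0)

/-- The relation `r^sub = (r, 1)` linking a mediator to the subject entity. -/
def subR {R : Type} (r : R) : R × Fin 3 := (r, 1)

/-- The relation `r^obj = (r, 2)` linking a mediator to the object entity. -/
def objR {R : Type} (r : R) : R × Fin 3 := (r, 2)

/-- The equivalent transformation `T_ι(G)`: the set of triples over entity type `E ⊕ M`
and relation type `R × Fin 3` determined by the HKG `G` and the enumeration `ι` of
mediator names. -/
def transSet {E R M : Type} (ι : HFact E R → M) (G : Finset (HFact E R)) :
    Set ((E ⊕ M) × (R × Fin 3) × (E ⊕ M)) :=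
  {t | ∃ f ∈ G,
    t = (Sum.inl f.s, prim f.r, Sum.inl f.o) ∨
      (f.q.Nonempty ∧
        (t = (Sum.inr (ι f), subR f.r, Sum.inl f.s) ∨
         t = (Sum.inr (ι f), objR f.r, Sum.inl f.o) ∨
         ∃ a v, (a, v) ∈ f.q ∧ t = (Sum.inr (ι f), prim a, Sum.inl v)))}

/-- Part (i) of the recovery map: the facts `(s, r, o, q_b)` obtained from a mediator
`b` with `(b, sub r, s) ∈ K`, `(b, obj r, o) ∈ K`, and
`q_b = {(a, v) : (b, prim a, v) ∈ K}`. -/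
def recQual {E R M : Type} (K : Set ((E ⊕ M) × (R × Fin 3) × (E ⊕ M))) :
    Set (HFact E R) :=
  {f | ∃ b : M,
    (Sum.inr b, subR f.r, Sum.inl f.s) ∈ K ∧
    (Sum.inr b, objR f.r, Sum.inl f.o) ∈ K ∧
    ∀ a v, (a, v) ∈ f.q ↔ (Sum.inr b, prim a, Sum.inl v) ∈ K}

/-- The recovery map `Rec`: facts from part (i), together with the triple facts
`(s, r, o, ∅)` for primary edges `(s, prim r, o) ∈ K` whose primary triple is not
that of any fact produced in part (i). -/
def recHKG {E R M : Type} (K : Set ((E ⊕ M) × (R × Fin 3) × (E ⊕ M))) :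
    Set (HFact E R) :=
  recQual K ∪
    {f | f.q = ∅ ∧ (Sum.inl f.s, prim f.r, Sum.inl f.o) ∈ K ∧
      ∀ g ∈ recQual (E := E) (R := R) (M := M) K, (g.s, g.r, g.o) ≠ (f.s, f.r, f.o)}

/-- `G` is non-redundant: no triple fact of `G` shares its primary triple with a
qualified fact of `G`. -/
def NonRedundant {E R : Type} (G : Finset (HFact E R)) : Prop :=
  ∀ f ∈ G, ∀ g ∈ G, f.q = ∅ → g.q ≠ ∅ → (f.s, f.r, f.o) ≠ (g.s, g.r, g.o)

section Aux

variable {E R M : Type} (ι : HFact E R → M) (G : Finset (HFact E R))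

lemma mem_trans_sub {b : M} {r : R} {s : E} :
    (Sum.inr b, subR r, Sum.inl s) ∈ transSet ι G ↔
      ∃ g ∈ G, g.q.Nonempty ∧ ι g = b ∧ g.r = r ∧ g.s = s := by
  constructor
  · rintro ⟨f, hf, h | ⟨hq, h | h | ⟨a, v, hav, h⟩⟩⟩
    · simp [prim, subR, Prod.ext_iff] at h
    · simp only [prim, subR, Prod.mk.injEq, Sum.inr.injEq, Sum.inl.injEq] at h
      exact ⟨f, hf, hq, h.1.symm, h.2.1.1.symm, h.2.2.symm⟩
    · simp [subR, objR, Prod.ext_iff] at h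
    · simp [subR, prim, Prod.ext_iff] at h
  · rintro ⟨g, hg, hq, rfl, rfl, rfl⟩
    exact ⟨g, hg, Or.inr ⟨hq, Or.inl rfl⟩⟩

lemma mem_trans_obj {b : M} {r : R} {o : E} :
    (Sum.inr b, objR r, Sum.inl o) ∈ transSet ι G ↔
      ∃ g ∈ G, g.q.Nonempty ∧ ι g = b ∧ g.r = r ∧ g.o = o := by
  constructor
  · rintro ⟨f, hf, h | ⟨hq, h | h | ⟨a, v, hav, h⟩⟩⟩
    · simp [prim, objR, Prod.ext_iff] at h
    · simp [subR, objR, Prod.ext_iff] at h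
    · simp only [prim, objR, Prod.mk.injEq, Sum.inr.injEq, Sum.inl.injEq] at h
      exact ⟨f, hf, hq, h.1.symm, h.2.1.1.symm, h.2.2.symm⟩
    · simp [objR, prim, Prod.ext_iff] at h
  · rintro ⟨g, hg, hq, rfl, rfl, rfl⟩
    exact ⟨g, hg, Or.inr ⟨hq, Or.inr (Or.inl rfl)⟩⟩

lemma mem_trans_primM {b : M} {a : R} {v : E} :
    (Sum.inr b, prim a, Sum.inl v) ∈ transSet ι G ↔
      ∃ g ∈ G, g.q.Nonempty ∧ ι g = b ∧ (a, v) ∈ g.q := by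
  constructor
  · rintro ⟨f, hf, h | ⟨hq, h | h | ⟨a', v', hav, h⟩⟩⟩
    · simp [prim, Prod.ext_iff] at h
    · simp [subR, prim, Prod.ext_iff] at h
    · simp [objR, prim, Prod.ext_iff] at h
    · simp only [prim, Prod.mk.injEq, Sum.inr.injEq, Sum.inl.injEq] at h
      exact ⟨f, hf, hq, h.1.symm, h.2.1.1 ▸ h.2.2 ▸ hav⟩
  · rintro ⟨g, hg, hq, rfl, hav⟩
    exact ⟨g, hg, Or.inr ⟨hq, Or.inr (Or.inr ⟨a, v, hav, rfl⟩)⟩⟩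

lemma mem_trans_primE {s : E} {r : R} {o : E} :
    (Sum.inl s, prim r, Sum.inl o) ∈ transSet ι G ↔
      ∃ g ∈ G, g.s = s ∧ g.r = r ∧ g.o = o := by
  constructor
  · rintro ⟨f, hf, h | ⟨hq, h | h | ⟨a, v, hav, h⟩⟩⟩
    · simp only [prim, Prod.mk.injEq, Sum.inl.injEq] at h
      exact ⟨f, hf, h.1.symm, h.2.1.1.symm, h.2.2.symm⟩
    · simp [subR, prim, Prod.ext_iff] at h
    · simp [objR, prim, Prod.ext_iff] at h
    · simp [prim, Prod.ext_iff] at h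
  · rintro ⟨g, hg, rfl, rfl, rfl⟩
    exact ⟨g, hg, Or.inl rfl⟩

lemma recQual_trans (hι : Set.InjOn ι ↑G) :
    recQual (transSet ι G) = {f : HFact E R | f ∈ G ∧ f.q.Nonempty} := by
  ext f
  constructor
  · rintro ⟨b, hs, ho, hq⟩
    rw [mem_trans_sub] at hs
    rw [mem_trans_obj] at ho
    obtain ⟨g, hg, hgq, rfl, hr, hsv⟩ := hs
    obtain ⟨g', hg', hgq', hb', hr', hov⟩ := ho
    have hgg : g' = g := hι hg' hg hb'
    have hov' : g.o = f.o := hgg ▸ hov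
    have hq' : f.q = g.q := by
      ext ⟨a, v⟩
      rw [hq a v, mem_trans_primM]
      constructor
      · rintro ⟨g'', hg'', _, hb'', hav⟩
        have : g'' = g := hι hg'' hg hb''
        exact this ▸ hav
      · intro hav; exact ⟨g, hg, hgq, rfl, hav⟩
    have hfg : f = g := by
      cases f; cases g
      simp_all
    exact hfg ▸ ⟨hg, hgq⟩
  · rintro ⟨hf, hq⟩
    refine ⟨ι f, ?_, ?_, ?_⟩
    · exact (mem_trans_sub ι G).mpr ⟨f, hf, hq, rfl, rfl, rfl⟩
    · exact (mem_trans_obj ι G).mpr ⟨f, hf, hq, rfl, rfl, rfl⟩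
    · intro a v
      rw [mem_trans_primM]
      constructor
      · intro hav; exact ⟨f, hf, hq, rfl, hav⟩
      · rintro ⟨g, hg, _, hb, hav⟩
        have : g = f := hι hg hf hb
        exact this ▸ hav

end Aux

/-- For every non-redundant HKG `G` and every injective enumeration
`ι` of mediator names, the recovery map applied to the equivalent transformation
returns `G` exactly: `Rec (T_ι G) = G`. -/
theorem rec_transSet_eq {E R M : Type} (G : Finset (HFact E R))
    (hG : NonRedundant G) (ι : HFact E R → M) (hι : Set.InjOn ι ↑G) :
    recHKG (transSet ι G) = ↑G := by
  ext f
  rw [recHKG, Set.mem_union, recQual_trans ι G hι]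
  constructor
  · rintro (⟨hf, _⟩ | ⟨hq, hprim, hne⟩)
    · exact hf
    · rw [mem_trans_primE] at hprim
      obtain ⟨g, hg, hs, hr, ho⟩ := hprim
      rcases Finset.eq_empty_or_nonempty g.q with hgq | hgq
      · have : f = g := by cases f; cases g; simp_all
        exact this ▸ hg
      · exact absurd (Prod.ext hs (Prod.ext hr ho))
          (hne g ⟨hg, hgq⟩)
  · intro hf
    rcases Finset.eq_empty_or_nonempty f.q with hq | hq
    · refine Or.inr ⟨hq, (mem_trans_primE ι G).mpr ⟨f, hf, rfl, rfl, rfl⟩, ?_⟩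
      rintro g ⟨hg, hgq⟩ heq
      exact hG f hf g hg hq (Finset.nonempty_iff_ne_empty.mp hgq) heq.symm
    · exact Or.inl ⟨hf, hq⟩
end

section
/- The equivalent transformation is injective on non-redundant HKGs, independently of the choice of mediator names: for any non-redundant HKGs G₁, G₂ over the same (E, R) and any injective enumerations ι₁ : G₁ → M, ι₂ : G₂ → M, if T_{ι₁}(G₁) = T_{ι₂}(G₂) as sets of triples, then G₁ = G₂. Hence no two distinct non-redundant HKGs are transformed to the same knowledge graph. -/
theorem HFact.ext' {E R : Type} {f g : HFact E R} (hs : f.s = g.s) (hr : f.r = g.r)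
    (ho : f.o = g.o) (hq : f.q = g.q) : f = g := by
  cases f; cases g; simp_all

theorem transSet_subset {E R M : Type} (G₁ G₂ : Finset (HFact E R))
    (h₁ : NonRedundant G₁)
    (ι₁ ι₂ : HFact E R → M)
    (hι₁ : Set.InjOn ι₁ ↑G₁) (hι₂ : Set.InjOn ι₂ ↑G₂)
    (heq : transSet ι₁ G₁ = transSet ι₂ G₂) :
    G₁ ⊆ G₂ := by
  intro f hf
  have hmem : ∀ t, t ∈ transSet ι₁ G₁ ↔ t ∈ transSet ι₂ G₂ := fun t => by rw [heq]
  by_cases hq : f.q = ∅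
  · -- triple fact
    obtain ⟨g, hg, hcase⟩ := (hmem (Sum.inl f.s, prim f.r, Sum.inl f.o)).mp
      ⟨f, hf, Or.inl rfl⟩
    simp only [transSet, prim, subR, objR, Prod.mk.injEq, Sum.inl.injEq,
      reduceCtorEq, false_and, and_false, exists_const, or_false, exists_false,
      or_self] at hcase
    obtain ⟨hss, ⟨hrr, -⟩, hoo⟩ := hcase
    by_cases hgq : g.q = ∅
    · rwa [HFact.ext' hss hrr hoo (hq.trans hgq.symm)]
    · exfalso
      have hgq' : g.q.Nonempty := Finset.nonempty_iff_ne_empty.mpr hgq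
      obtain ⟨f', hf', hc'⟩ := (hmem (Sum.inr (ι₂ g), subR g.r, Sum.inl g.s)).mpr
        ⟨g, hg, Or.inr ⟨hgq', Or.inl rfl⟩⟩
      simp only [transSet, prim, subR, objR, Prod.mk.injEq, Sum.inr.injEq,
        Sum.inl.injEq, reduceCtorEq, false_and, and_false, exists_const,
        exists_false, or_false, false_or] at hc'
      obtain ⟨hf'q, hc'⟩ := hc'
      rcases hc' with ⟨hι, ⟨hr', -⟩, hs'⟩ | ⟨-, ⟨-, habs⟩, -⟩ | ⟨a, v, -, -, ⟨-, habs⟩, -⟩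
      · obtain ⟨f'', hf'', hc''⟩ := (hmem (Sum.inr (ι₂ g), objR g.r, Sum.inl g.o)).mpr
          ⟨g, hg, Or.inr ⟨hgq', Or.inr (Or.inl rfl)⟩⟩
        simp only [transSet, prim, subR, objR, Prod.mk.injEq, Sum.inr.injEq,
          Sum.inl.injEq, reduceCtorEq, false_and, and_false, exists_const,
          exists_false, or_false, false_or] at hc''
        obtain ⟨hf''q, hc''⟩ := hc''
        rcases hc'' with ⟨-, ⟨-, habs⟩, -⟩ | ⟨hι'', ⟨hr'', -⟩, ho''⟩ | ⟨a, v, -, -, ⟨-, habs⟩, -⟩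
        · exact absurd habs (by decide)
        · have hef : f'' = f' := hι₁ hf'' hf' (hι''.symm.trans hι)
          subst hef
          exact h₁ f hf f'' hf' hq (Finset.nonempty_iff_ne_empty.mp hf'q)
            (by rw [hss, hs', hrr, hr', hoo, ho''])
        · exact absurd habs (by decide)
      · exact absurd habs (by decide)
      · exact absurd habs (by decide)
  · -- qualified fact
    have hq' : f.q.Nonempty := Finset.nonempty_iff_ne_empty.mpr hq
    obtain ⟨g, hg, hc⟩ := (hmem (Sum.inr (ι₁ f), subR f.r, Sum.inl f.s)).mp
      ⟨f, hf, Or.inr ⟨hq', Or.inl rfl⟩⟩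
    simp only [transSet, prim, subR, objR, Prod.mk.injEq, Sum.inr.injEq,
      Sum.inl.injEq, reduceCtorEq, false_and, and_false, exists_const,
      exists_false, or_false, false_or] at hc
    obtain ⟨hgq, hc⟩ := hc
    rcases hc with ⟨hι, ⟨hr, -⟩, hs⟩ | ⟨-, ⟨-, habs⟩, -⟩ | ⟨a, v, -, -, ⟨-, habs⟩, -⟩
    · obtain ⟨g', hg', hc'⟩ := (hmem (Sum.inr (ι₁ f), objR f.r, Sum.inl f.o)).mp
        ⟨f, hf, Or.inr ⟨hq', Or.inr (Or.inl rfl)⟩⟩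
      simp only [transSet, prim, subR, objR, Prod.mk.injEq, Sum.inr.injEq,
        Sum.inl.injEq, reduceCtorEq, false_and, and_false, exists_const,
        exists_false, or_false, false_or] at hc'
      obtain ⟨hg'q, hc'⟩ := hc'
      rcases hc' with ⟨-, ⟨-, habs⟩, -⟩ | ⟨hι', ⟨hr', -⟩, ho⟩ | ⟨a, v, -, -, ⟨-, habs⟩, -⟩
      · exact absurd habs (by decide)
      · have hgg' : g = g' := hι₂ hg hg' (hι.symm.trans hι')
        subst hgg'
        have hqeq : f.q = g.q := by
          apply Finset.Subset.antisymm
          · intro ⟨a, v⟩ hav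
            obtain ⟨g'', hg'', hc''⟩ := (hmem (Sum.inr (ι₁ f), prim a, Sum.inl v)).mp
              ⟨f, hf, Or.inr ⟨hq', Or.inr (Or.inr ⟨a, v, hav, rfl⟩)⟩⟩
            simp only [transSet, prim, subR, objR, Prod.mk.injEq, Sum.inr.injEq,
              Sum.inl.injEq, reduceCtorEq, false_and, and_false, exists_const,
              exists_false, or_false, false_or] at hc''
            obtain ⟨-, hc''⟩ := hc''
            rcases hc'' with ⟨-, ⟨-, habs⟩, -⟩ | ⟨-, ⟨-, habs⟩, -⟩ |
              ⟨a', v', hav', hι'', ⟨ha', -⟩, hv'⟩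
            · exact absurd habs (by decide)
            · exact absurd habs (by decide)
            · have hgg : g'' = g := hι₂ hg'' hg (hι''.symm.trans hι)
              subst hgg
              rw [← ha', ← hv'] at hav'
              exact hav'
          · intro ⟨a, v⟩ hav
            obtain ⟨f'', hf'', hc''⟩ := (hmem (Sum.inr (ι₂ g), prim a, Sum.inl v)).mpr
              ⟨g, hg, Or.inr ⟨hgq, Or.inr (Or.inr ⟨a, v, hav, rfl⟩)⟩⟩
            simp only [transSet, prim, subR, objR, Prod.mk.injEq, Sum.inr.injEq,
              Sum.inl.injEq, reduceCtorEq, false_and, and_false, exists_const,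
              exists_false, or_false, false_or] at hc''
            obtain ⟨-, hc''⟩ := hc''
            rcases hc'' with ⟨-, ⟨-, habs⟩, -⟩ | ⟨-, ⟨-, habs⟩, -⟩ |
              ⟨a', v', hav', hι'', ⟨ha', -⟩, hv'⟩
            · exact absurd habs (by decide)
            · exact absurd habs (by decide)
            · have hff : f'' = f := hι₁ hf'' hf (hι''.symm.trans hι.symm)
              subst hff
              rw [← ha', ← hv'] at hav'
              exact hav'
        rwa [HFact.ext' hs hr ho hqeq]
      · exact absurd habs (by decide)
    · exact absurd habs (by decide)
    · exact absurd habs (by decide)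

/-- The equivalent transformation is injective on non-redundant HKGs,
independently of the choice of mediator names: if `T_{ι₁}(G₁) = T_{ι₂}(G₂)` for
injective enumerations `ι₁`, `ι₂`, then `G₁ = G₂`. -/
theorem transSet_injective {E R M : Type} (G₁ G₂ : Finset (HFact E R))
    (h₁ : NonRedundant G₁) (h₂ : NonRedundant G₂)
    (ι₁ ι₂ : HFact E R → M)
    (hι₁ : Set.InjOn ι₁ ↑G₁) (hι₂ : Set.InjOn ι₂ ↑G₂)
    (heq : transSet ι₁ G₁ = transSet ι₂ G₂) :
    G₁ = G₂ :=
  Finset.Subset.antisymm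
    (transSet_subset G₁ G₂ h₁ ι₁ ι₂ hι₁ hι₂ heq)
    (transSet_subset G₂ G₁ h₂ ι₂ ι₁ hι₂ hι₁ heq.symm)
end

section
/- The plain transformation leads to information loss: there exist a type E with at least three elements, a type R with at least two elements, a mediator type M, two distinct HKGs G₁ ≠ G₂ over (E, R), and injective enumerations ι₁ : G₁ → M, ι₂ : G₂ → M such that P_{ι₁}(G₁) = P_{ι₂}(G₂). In particular, two HKGs differing only in the attribute label of a qualifier have equal plain transformations, so the original HKG cannot be recovered from its plain transformation. -/
/-- The plain transformation `P_ι(G)` (star expansion without attributes considered):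
triple facts contribute `(s, r, o)`; a qualified fact `f = (s, r, o, q)` contributes
`(ι f, r, s)`, `(ι f, r, o)` and `(ι f, r, v)` for every `(a, v) ∈ q`, the attribute
labels `a` being discarded. -/
def plainSet {E R M : Type} (ι : HFact E R → M) (G : Finset (HFact E R)) :
    Set ((E ⊕ M) × R × (E ⊕ M)) :=
  {t | ∃ f ∈ G,
    (f.q = ∅ ∧ t = (Sum.inl f.s, f.r, Sum.inl f.o)) ∨
      (f.q.Nonempty ∧
        (t = (Sum.inr (ι f), f.r, Sum.inl f.s) ∨
         t = (Sum.inr (ι f), f.r, Sum.inl f.o) ∨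
         ∃ a v, (a, v) ∈ f.q ∧ t = (Sum.inr (ι f), f.r, Sum.inl v)))}

/-- The plain transformation leads to information loss: there are a
type `E` with at least three elements, a type `R` with at least two elements, a
mediator type `M`, distinct HKGs `G₁ ≠ G₂` and injective enumerations `ι₁`, `ι₂` with
`P_{ι₁}(G₁) = P_{ι₂}(G₂)`. -/
theorem plain_information_loss :
    ∃ (E R M : Type) (G₁ G₂ : Finset (HFact E R)) (ι₁ ι₂ : HFact E R → M),
      3 ≤ Nat.card E ∧ 2 ≤ Nat.card R ∧
      G₁ ≠ G₂ ∧
      Set.InjOn ι₁ ↑G₁ ∧ Set.InjOn ι₂ ↑G₂ ∧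
      plainSet ι₁ G₁ = plainSet ι₂ G₂ := by
  refine ⟨Fin 3, Fin 2, Unit, {⟨0, 0, 1, {(0, 2)}⟩}, {⟨0, 0, 1, {(1, 2)}⟩},
    fun _ => (), fun _ => (), by simp, by simp, ?_, ?_, ?_, ?_⟩
  · intro h
    have := Finset.singleton_inj.mp h
    simp [HFact.mk.injEq, Finset.singleton_inj, Prod.ext_iff] at this
  · intro a ha b hb _; simp_all
  · intro a ha b hb _; simp_all
  · ext t
    simp only [plainSet, Set.mem_setOf_eq, Finset.mem_singleton]
    constructor
    · rintro ⟨f, rfl, h⟩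
      refine ⟨_, rfl, ?_⟩
      simp at h ⊢
      tauto
    · rintro ⟨f, rfl, h⟩
      refine ⟨_, rfl, ?_⟩
      simp at h ⊢
      tauto
end

section
/- The clique-based plain transformation leads to information loss: there exist a type E with at least three elements, a type R with at least two elements, and two distinct HKGs G₁ ≠ G₂ over (E, R) such that C(G₁) = C(G₂). In particular, two HKGs differing only in the attribute label of a qualifier have equal clique-based plain transformations, so the original HKG cannot be recovered from its clique-based plain transformation. -/
/-- The entities involved in a qualified fact: subject, object and qualifier values. -/
def involved {E R : Type} (f : HFact E R) : Set E :=
  {f.s, f.o} ∪ {v | ∃ a, (a, v) ∈ f.q}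

/-- The clique-based plain transformation `C(G)`: triple facts contribute `(s, r, o)`;
a qualified fact `(s, r, o, q)` contributes `(x, r, y)` for every ordered pair of
distinct entities `x, y` from `{s, o} ∪ {v : (a, v) ∈ q}`, the attribute labels being
discarded. -/
def cliquePlain {E R : Type} (G : Finset (HFact E R)) : Set (E × R × E) :=
  {t | ∃ f ∈ G,
    (f.q = ∅ ∧ t = (f.s, f.r, f.o)) ∨
      (f.q.Nonempty ∧
        ∃ x ∈ involved f, ∃ y ∈ involved f, x ≠ y ∧ t = (x, f.r, y))}

/-- The clique-based plain transformation leads to information loss: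
there are a type `E` with at least three elements, a type `R` with at least two
elements, and distinct HKGs `G₁ ≠ G₂` over `(E, R)` with `C(G₁) = C(G₂)`. -/
theorem cliquePlain_information_loss :
    ∃ (E R : Type) (G₁ G₂ : Finset (HFact E R)),
      3 ≤ Nat.card E ∧ 2 ≤ Nat.card R ∧
      G₁ ≠ G₂ ∧ cliquePlain G₁ = cliquePlain G₂ := by
  classical
  refine ⟨Fin 3, Fin 2, {⟨0, 0, 1, {(0, 2)}⟩}, {⟨0, 0, 1, {(1, 2)}⟩}, ?_, ?_, ?_, ?_⟩
  · simp
  · simp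
  · intro h
    have := Finset.mem_singleton.mp (h ▸ Finset.mem_singleton_self (⟨0, 0, 1, {(0, 2)}⟩ : HFact (Fin 3) (Fin 2)))
    simp [HFact.mk.injEq] at this
  · have hinv : involved (⟨0, 0, 1, {(0, 2)}⟩ : HFact (Fin 3) (Fin 2)) =
        involved (⟨0, 0, 1, {(1, 2)}⟩ : HFact (Fin 3) (Fin 2)) := by
      ext x
      simp [involved]
    ext t
    simp only [cliquePlain, Set.mem_setOf_eq, Finset.mem_singleton]
    constructor
    · rintro ⟨f, rfl, h⟩
      refine ⟨⟨0, 0, 1, {(1, 2)}⟩, rfl, ?_⟩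
      rcases h with ⟨h, _⟩ | ⟨_, h⟩
      · simp at h
      · exact Or.inr ⟨⟨(1, 2), by simp⟩, hinv ▸ h⟩
    · rintro ⟨f, rfl, h⟩
      refine ⟨⟨0, 0, 1, {(0, 2)}⟩, rfl, ?_⟩
      rcases h with ⟨h, _⟩ | ⟨_, h⟩
      · simp at h
      · exact Or.inr ⟨⟨(0, 2), by simp⟩, hinv ▸ h⟩
end

section
/- Full expressivity of TransEQ (Theorem 2, encoder part instantiated with R-GCN): for every scoring function φ, every number of layers L, and every validity labeling ℓ : F → Prop, if φ is fully expressive for ℓ, then the TransEQ model with L-layer R-GCN encoder and decoder φ is fully expressive for ℓ; i.e., there exist layer parameters W¹, …, W^L, initial entity embeddings h⁰ : V → ℝ^d, relation embeddings ρ : Rel → ℝ^d, and a threshold τ ∈ ℝ such that for every fact f ∈ F, φ (Enc h⁰) ρ f > τ if and only if ℓ f, where Enc is the L-layer R-GCN encoder with parameters W¹, …, W^L. -/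
/-- An R-GCN layer (activation removed). -/
noncomputable def rgcnLayer {V Rel : Type} [Fintype Rel] {d : ℕ}
    (N : Rel → V → Finset V)
    (W : Rel → Matrix (Fin d) (Fin d) ℝ) (W₀ : Matrix (Fin d) (Fin d) ℝ)
    (h : V → Fin d → ℝ) : V → Fin d → ℝ :=
  fun t =>
    (∑ r : Rel, ∑ u ∈ N r t, (((N r t).card : ℝ))⁻¹ • (W r).mulVec (h u)) +
      W₀.mulVec (h t)

/-- The `L`-layer R-GCN encoder: the composition `Layer_{W^L} ∘ ⋯ ∘ Layer_{W¹}`. -/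
noncomputable def rgcnEncoder {V Rel : Type} [Fintype Rel] {d : ℕ}
    (N : Rel → V → Finset V) :
    (L : ℕ) →
      (Fin L → (Rel → Matrix (Fin d) (Fin d) ℝ) × Matrix (Fin d) (Fin d) ℝ) →
        (V → Fin d → ℝ) → (V → Fin d → ℝ)
  | 0, _, h => h
  | L + 1, Ws, h =>
      rgcnLayer N (Ws (Fin.last L)).1 (Ws (Fin.last L)).2
        (rgcnEncoder N L (fun i => Ws i.castSucc) h)

/-- A scoring function `φ` is fully expressive for a validity labeling `ℓ` if there
exist entity embeddings, relation embeddings and a threshold separating valid facts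
from invalid ones. -/
def FullyExpressive {V Rel F : Type} {d : ℕ}
    (φ : (V → Fin d → ℝ) → (Rel → Fin d → ℝ) → F → ℝ) (ℓ : F → Prop) : Prop :=
  ∃ (h : V → Fin d → ℝ) (ρ : Rel → Fin d → ℝ) (τ : ℝ),
    ∀ f : F, φ h ρ f > τ ↔ ℓ f

lemma rgcnLayer_id {V Rel : Type} [Fintype Rel] {d : ℕ}
    (N : Rel → V → Finset V) (h : V → Fin d → ℝ) :
    rgcnLayer N (fun _ => (0 : Matrix (Fin d) (Fin d) ℝ)) 1 h = h := by
  funext t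
  simp [rgcnLayer, Matrix.mulVec_zero, Matrix.one_mulVec]

lemma rgcnEncoder_id {V Rel : Type} [Fintype Rel] {d : ℕ}
    (N : Rel → V → Finset V) (L : ℕ) (h : V → Fin d → ℝ) :
    rgcnEncoder N L (fun _ => ((fun _ => 0), 1)) h = h := by
  induction L with
  | zero => rfl
  | succ L ih => simp [rgcnEncoder, ih, rgcnLayer_id]

/-- **Theorem 2, encoder instantiated with R-GCN.** If the scoring
function `φ` is fully expressive for the labeling `ℓ`, then the TransEQ model with
`L`-layer R-GCN encoder and decoder `φ` is fully expressive for `ℓ`. -/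
theorem transEQ_fully_expressive {V Rel F : Type}
    [Fintype V] [Fintype Rel] [Fintype F] {d : ℕ}
    (N : Rel → V → Finset V)
    (φ : (V → Fin d → ℝ) → (Rel → Fin d → ℝ) → F → ℝ)
    (L : ℕ) (ℓ : F → Prop)
    (hφ : FullyExpressive φ ℓ) :
    ∃ (Ws : Fin L → (Rel → Matrix (Fin d) (Fin d) ℝ) × Matrix (Fin d) (Fin d) ℝ)
      (h0 : V → Fin d → ℝ) (ρ : Rel → Fin d → ℝ) (τ : ℝ),
      ∀ f : F, φ (rgcnEncoder N L Ws h0) ρ f > τ ↔ ℓ f := by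
  obtain ⟨h, ρ, τ, hτ⟩ := hφ
  exact ⟨fun _ => ((fun _ => 0), 1), h, ρ, τ, by rw [rgcnEncoder_id]; exact hτ⟩
end

section
/- Exact size of the transformed KG: let G be an HKG whose facts have pairwise distinct primary triples (f ≠ f′ in G implies (s_f, r_f, o_f) ≠ (s_{f′}, r_{f′}, o_{f′})) and let ι : G → M be injective. Then the number of triples in T_ι(G) equals N^tri + Σ_{f ∈ G, q_f ≠ ∅} (|q_f| + 3), where N^tri is the number of facts of G with empty qualifier set and |q_f| is the number of attribute–value qualifiers of f. -/
/-- The triples contributed by a single fact under the equivalent transformation: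
the primary triple `(s, prim r, o)` always, together with the mediator triples
`(ι f, sub r, s)`, `(ι f, obj r, o)` and `(ι f, prim a, v)` for `(a, v) ∈ q` when the
qualifier set is nonempty. -/
def factTriples {E R M : Type} [DecidableEq E] [DecidableEq R] [DecidableEq M]
    (ι : HFact E R → M) (f : HFact E R) :
    Finset ((E ⊕ M) × (R × Fin 3) × (E ⊕ M)) :=
  {(Sum.inl f.s, prim f.r, Sum.inl f.o)} ∪
    (if f.q.Nonempty then
      {(Sum.inr (ι f), subR f.r, Sum.inl f.s),
       (Sum.inr (ι f), objR f.r, Sum.inl f.o)} ∪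
        f.q.image (fun av => (Sum.inr (ι f), prim av.1, Sum.inl av.2))
    else ∅)

/-- The equivalent transformation `T_ι(G)` as a finite set of triples. -/
def transEQ {E R M : Type} [DecidableEq E] [DecidableEq R] [DecidableEq M]
    (ι : HFact E R → M) (G : Finset (HFact E R)) :
    Finset ((E ⊕ M) × (R × Fin 3) × (E ⊕ M)) :=
  G.biUnion (factTriples ι)

lemma mem_factTriples {E R M : Type} [DecidableEq E] [DecidableEq R] [DecidableEq M]
    (ι : HFact E R → M) (f : HFact E R) (x : (E ⊕ M) × (R × Fin 3) × (E ⊕ M))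
    (hx : x ∈ factTriples ι f) :
    x = (Sum.inl f.s, prim f.r, Sum.inl f.o) ∨ x.1 = Sum.inr (ι f) := by
  simp only [factTriples, Finset.mem_union, Finset.mem_singleton, Finset.mem_insert,
    Finset.mem_image] at hx
  rcases hx with h | h
  · exact Or.inl h
  · split at h
    · simp only [Finset.mem_union, Finset.mem_insert, Finset.mem_singleton,
        Finset.mem_image] at h
      rcases h with (h | h) | ⟨a, _, h⟩ <;> subst h <;> right <;> rfl
    · simp at h

lemma card_factTriples {E R M : Type} [DecidableEq E] [DecidableEq R] [DecidableEq M]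
    (ι : HFact E R → M) (f : HFact E R) :
    (factTriples ι f).card = if f.q.Nonempty then f.q.card + 3 else 1 := by
  unfold factTriples
  split
  next h =>
    rw [Finset.card_union_of_disjoint, Finset.card_union_of_disjoint,
      Finset.card_image_of_injOn, Finset.card_singleton]
    · rw [Finset.card_insert_of_notMem (by simp [subR, objR, Prod.ext_iff, Fin.ext_iff]),
        Finset.card_singleton]
      omega
    · intro a _ b _ hab
      simp only [Prod.mk.injEq, Sum.inl.injEq, prim] at hab
      exact Prod.ext hab.2.1.1 hab.2.2
    · simp only [Finset.disjoint_left, Finset.mem_insert, Finset.mem_singleton,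
        Finset.mem_image]
      rintro x (h | h) ⟨a, _, h2⟩ <;> subst h <;>
        simp [subR, objR, prim, Prod.ext_iff, Fin.ext_iff] at h2
    · simp only [Finset.disjoint_left, Finset.mem_singleton, Finset.mem_union,
        Finset.mem_insert, Finset.mem_image]
      rintro x h (⟨h2 | h2⟩ | ⟨a, _, h2⟩) <;> subst h <;> simp_all
  next h => simp

/-- If the facts of `G` have pairwise distinct primary triples and
`ι` is injective, then `|T_ι(G)| = N^tri + Σ_{f ∈ G, q_f ≠ ∅} (|q_f| + 3)`, where
`N^tri` is the number of triple facts of `G`. -/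
theorem transEQ_card {E R M : Type} [DecidableEq E] [DecidableEq R] [DecidableEq M]
    (G : Finset (HFact E R)) (ι : HFact E R → M) (hι : Set.InjOn ι ↑G)
    (hdist : ∀ f ∈ G, ∀ g ∈ G, f ≠ g → (f.s, f.r, f.o) ≠ (g.s, g.r, g.o)) :
    (transEQ ι G).card =
      (G.filter fun f => f.q = ∅).card +
        ∑ f ∈ G.filter (fun f => f.q.Nonempty), (f.q.card + 3) := by
  rw [transEQ, Finset.card_biUnion]
  · have hsplit := Finset.sum_filter_add_sum_filter_not G (fun f => f.q.Nonempty)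
      (fun f => (factTriples ι f).card)
    calc ∑ f ∈ G, (factTriples ι f).card
        = ∑ f ∈ G.filter (fun f => f.q.Nonempty), (factTriples ι f).card
          + ∑ f ∈ G.filter (fun f => ¬ f.q.Nonempty), (factTriples ι f).card := hsplit.symm
      _ = _ := by
          rw [add_comm]
          congr 1
          · have : (G.filter fun f => f.q = ∅) = G.filter (fun f => ¬ f.q.Nonempty) := by
              apply Finset.filter_congr
              intro f _
              simp [Finset.not_nonempty_iff_eq_empty]
            rw [this, Finset.card_eq_sum_ones]
            apply Finset.sum_congr rfl
            intro f hf
            rw [Finset.mem_filter] at hf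
            rw [card_factTriples, if_neg hf.2]
          · apply Finset.sum_congr rfl
            intro f hf
            rw [Finset.mem_filter] at hf
            rw [card_factTriples, if_pos hf.2]
  · intro f hf g hg hfg
    simp only [Finset.disjoint_left]
    intro x hxf hxg
    rcases mem_factTriples ι f x hxf with h1 | h1 <;>
      rcases mem_factTriples ι g x hxg with h2 | h2
    · subst h1
      apply hdist f hf g hg hfg
      simp only [Prod.mk.injEq, Sum.inl.injEq, prim] at h2
      simp [h2.1, h2.2.1.1, h2.2.2, Prod.ext_iff]
    · subst h1; simp at h2
    · subst h2; simp at h1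
    · rw [h1] at h2
      exact hfg (hι hf hg (Sum.inr.inj h2))
end
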